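/- Let v_0, v_1, …, v_{n-1} with n ≥ 4 be points in the plane in convex position and in general position (no three collinear), listed in convex-position order, and let H be a set of chords of the convex polygon (segments v_i v_j between two vertices that are not consecutive in the cyclic order) such that no two chords of H cross. Then there exist two vertices v_i and v_j that are not consecutive in the cyclic order and that are incident to no chord of H. -/

import Mathlib

open scoped Classical

noncomputable section

abbrev Pt : Type := ℝ × ℝ

/-- Two segments cross: they meet in a point that is not a common endpoint. -/
def SegCross (a b c d : Pt) : Prop :=
  ∃ x : Pt, x ∈ segment ℝ a b ∧ x ∈ segment ℝ c d ∧
    ¬ ((x = a ∨ x = b) ∧ (x = c ∨ x = d))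

/-- Crossing of two (undirected) straight-line edges. -/
def EdgeCross (e f : Sym2 Pt) : Prop :=
  ∃ a b c d : Pt, e = s(a, b) ∧ f = s(c, d) ∧ SegCross a b c d

/-- The closed segment represented by an undirected edge. -/
def SegOf (e : Sym2 Pt) : Set Pt :=
  Sym2.lift ⟨fun a b => segment ℝ a b, fun a b => segment_symm ℝ a b⟩ e

/-- General position: no three of the points are collinear. -/
def GenPos (V : Finset Pt) : Prop :=
  ∀ a ∈ V, ∀ b ∈ V, ∀ c ∈ V, a ≠ b → a ≠ c → b ≠ c →
    ¬ Collinear ℝ ({a, b, c} : Set Pt)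

/-- A plane geometric graph. -/
structure GeomGraph where
  V : Finset Pt
  E : Finset (Sym2 Pt)
  genpos : GenPos V
  edges_sub : ∀ e ∈ E, ∀ v ∈ e, v ∈ V
  edges_ne : ∀ e ∈ E, ¬ e.IsDiag
  plane : ∀ e ∈ E, ∀ f ∈ E, e ≠ f → ¬ EdgeCross e f

/-- Edges of the visibility graph of `G`. -/
def VisEdge (G : GeomGraph) (e : Sym2 Pt) : Prop :=
  ∃ u v : Pt, u ∈ G.V ∧ v ∈ G.V ∧ u ≠ v ∧ e = s(u, v) ∧ e ∉ G.E ∧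
    ∀ f ∈ G.E, ¬ EdgeCross e f

/-- Degree of a point in a finite set of undirected edges. -/
def degIn (H : Finset (Sym2 Pt)) (v : Pt) : ℕ :=
  (H.filter fun e => v ∈ e).card

/-- `H` is a happy set for `(G, R)`. -/
def IsHappySet (G : GeomGraph) (R : Finset Pt) (H : Finset (Sym2 Pt)) : Prop :=
  (∀ e ∈ H, VisEdge G e) ∧
  (∀ e ∈ H, ∀ f ∈ H, e ≠ f → ¬ EdgeCross e f) ∧
  (∀ v : Pt, Odd (degIn H v) ↔ v ∈ R)

def HasHappySet (G : GeomGraph) (R : Finset Pt) : Prop :=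
  ∃ H : Finset (Sym2 Pt), IsHappySet G R H

/-- The points of `V` are in convex position. -/
def ConvexPos (V : Finset Pt) : Prop :=
  ∀ v ∈ V, v ∉ convexHull ℝ ((V : Set Pt) \ {v})

/-- The segment `ab` lies on the boundary of the convex hull of `V`. -/
def OnHullFrontier (V : Finset Pt) (a b : Pt) : Prop :=
  segment ℝ a b ⊆ frontier (convexHull ℝ (V : Set Pt))

/-!
A supporting line through a boundary edge `v i v (i + 1)` has all other vertices strictly on one
side, and consecutive edges share a vertex triple, so all increasing triples `v a, v b, v c` have
the same orientation. Hence for `a < c < b < d` each of the segments `v a v b`, `v c v d` separates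
the endpoints of the other and they cross: the chords become pairwise non-interleaving pairs of
indices. In an interval that no chord leaves from its interior, descending to innermost chords
finds an interior vertex on no chord. If `v 0` is on no chord, `[1, n - 1]` is such an interval;
otherwise the farthest chord `s(0, b)` from `0` makes both `[0, b]` and `[b, n]` such intervals.
-/

def orient (p q r : Pt) : ℝ :=
  (q.1 - p.1) * (r.2 - p.2) - (q.2 - p.2) * (r.1 - p.1)

theorem orient_rotate (p q r : Pt) : orient p q r = orient q r p := by
  unfold orient; ring

theorem orient_swap (p q r : Pt) : orient p q r = -orient p r q := by
  unfold orient; ring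

-- a Grassmann–Plücker relation
theorem orient_mul_orient_eq (a b c d e : Pt) :
    orient a b d * orient a e c = orient a b c * orient a e d + orient a c d * orient a e b := by
  unfold orient; ring

theorem orient_smul_add_smul (a b c d : Pt) {s t : ℝ} (hst : s + t = 1) :
    orient a b (s • c + t • d) = s * orient a b c + t * orient a b d := by
  obtain rfl : t = 1 - s := by linarith
  unfold orient
  simp only [Prod.fst_add, Prod.snd_add, Prod.smul_fst, Prod.smul_snd, smul_eq_mul]
  ring

theorem collinear_of_orient_eq_zero {p q r : Pt} (h : orient p q r = 0) :
    Collinear ℝ ({p, q, r} : Set Pt) := by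
  rcases eq_or_ne p q with rfl | hpq
  · simpa using collinear_pair ℝ p r
  set N := (q.1 - p.1) ^ 2 + (q.2 - p.2) ^ 2
  have hN : N ≠ 0 := by
    intro hN
    apply hpq
    ext <;> nlinarith [sq_nonneg (q.1 - p.1), sq_nonneg (q.2 - p.2)]
  have hr : AffineMap.lineMap p q
      (((r.1 - p.1) * (q.1 - p.1) + (r.2 - p.2) * (q.2 - p.2)) / N) = r := by
    unfold orient at h
    ext <;> simp only [AffineMap.lineMap_apply, vsub_eq_sub, vadd_eq_add, Prod.fst_add,
      Prod.snd_add, Prod.smul_fst, Prod.smul_snd, Prod.fst_sub, Prod.snd_sub, smul_eq_mul] <;>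
      field_simp
    · linear_combination (q.2 - p.2) * h
    · linear_combination -(q.1 - p.1) * h
  rw [Set.pair_comm q r, Set.insert_comm p r, ← hr]
  exact collinear_insert_of_mem_affineSpan_pair (AffineMap.lineMap_mem_affineSpan_pair _ _ _)

theorem div_sub_nonneg_of_mul_neg {A B : ℝ} (h : A * B < 0) : 0 ≤ A / (A - B) := by
  rcases lt_or_gt_of_ne (left_ne_zero_of_mul h.ne) with hA | hA
  · exact div_nonneg_of_nonpos hA.le (by nlinarith)
  · exact div_nonneg hA.le (by nlinarith)

theorem sub_ne_zero_of_mul_neg {A B : ℝ} (h : A * B < 0) : A - B ≠ 0 := by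
  rw [sub_ne_zero]
  rintro rfl
  nlinarith [mul_self_nonneg A]

theorem one_sub_div_sub_nonneg_of_mul_neg {A B : ℝ} (h : A * B < 0) : 0 ≤ 1 - A / (A - B) := by
  have hBA : B * A < 0 := by rwa [mul_comm]
  rw [show 1 - A / (A - B) = B / (B - A) by
    field_simp [sub_ne_zero_of_mul_neg h, sub_ne_zero_of_mul_neg hBA]; ring]
  exact div_sub_nonneg_of_mul_neg hBA

theorem segCross_of_orient_mul_neg {a b c d : Pt} (hab : orient a b c * orient a b d < 0)
    (hcd : orient c d a * orient c d b < 0) : SegCross a b c d := by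
  set A := orient a b c
  set B := orient a b d
  set C := orient c d a
  set D := orient c d b
  have hAB := sub_ne_zero_of_mul_neg hab
  have hCD := sub_ne_zero_of_mul_neg hcd
  set t := A / (A - B)
  set u := C / (C - D)
  set x := (1 - t) • c + t • d
  -- the point where line `ab` meets `cd` is also the point where line `cd` meets `ab`
  have hx : (1 - u) • a + u • b = x := by
    have h1 : (A * d.1 - B * c.1) * (C - D) = (C * b.1 - D * a.1) * (A - B) := by
      simp only [A, B, C, D, orient]; ring
    have h2 : (A * d.2 - B * c.2) * (C - D) = (C * b.2 - D * a.2) * (A - B) := by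
      simp only [A, B, C, D, orient]; ring
    ext <;> simp only [x, t, u, Prod.fst_add, Prod.snd_add, Prod.smul_fst, Prod.smul_snd,
      smul_eq_mul] <;> field_simp
    · linear_combination -h1
    · linear_combination -h2
  have hx0 : orient a b x = 0 := by
    rw [orient_smul_add_smul a b c d (sub_add_cancel 1 t)]
    simp only [t]
    field_simp
    ring
  refine ⟨x, ⟨_, _, one_sub_div_sub_nonneg_of_mul_neg hcd, div_sub_nonneg_of_mul_neg hcd,
    sub_add_cancel 1 u, hx⟩, ⟨_, _, one_sub_div_sub_nonneg_of_mul_neg hab,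
    div_sub_nonneg_of_mul_neg hab, sub_add_cancel 1 t, rfl⟩, ?_⟩
  rintro ⟨-, h | h⟩ <;> rw [h] at hx0
  · exact hab.ne (by rw [show A = 0 from hx0, zero_mul])
  · exact hab.ne (by rw [show B = 0 from hx0, mul_zero])

theorem exists_orient_eq_mul_sub {f : Pt →L[ℝ] ℝ} (hf : f ≠ 0) {a b : Pt}
    (hab : f a = f b) :
    ∃ s : ℝ, ∀ y, orient a b y = s * (f a - f y) := by
  set α := f (1, 0)
  set β := f (0, 1)
  have hf_apply : ∀ p : Pt, f p = α * p.1 + β * p.2 := fun p => by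
    conv_lhs =>
      rw [show p = p.1 • ((1 : ℝ), (0 : ℝ)) + p.2 • ((0 : ℝ), (1 : ℝ)) by ext <;> simp]
    rw [map_add, map_smul, map_smul, smul_eq_mul, smul_eq_mul, mul_comm, mul_comm p.2]
  have hN : α ^ 2 + β ^ 2 ≠ 0 := by
    intro hN
    refine hf (ContinuousLinearMap.ext fun p => ?_)
    rw [hf_apply, show α = 0 by nlinarith, show β = 0 by nlinarith]
    simp
  refine ⟨(α * (b.2 - a.2) - β * (b.1 - a.1)) / (α ^ 2 + β ^ 2), fun y => ?_⟩
  rw [hf_apply, hf_apply] at hab ⊢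
  unfold orient
  field_simp
  linear_combination -(α * (y.2 - a.2) - β * (y.1 - a.1)) * hab

theorem orient_mul_orient_nonneg_of_midpoint_notMem_interior {K : Set Pt} (hK : Convex ℝ K)
    (hKi : (interior K).Nonempty) {a b y z : Pt} (ha : a ∈ K) (hb : b ∈ K)
    (hm : midpoint ℝ a b ∉ interior K) (hy : y ∈ K) (hz : z ∈ K) :
    0 ≤ orient a b y * orient a b z := by
  obtain ⟨f, hf, hmax⟩ := geometric_hahn_banach_of_nonempty_interior_point hK hm hKi
  have hfm : f (midpoint ℝ a b) = (f a + f b) / 2 := by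
    rw [midpoint_eq_smul_add, map_smul, map_add, smul_eq_mul, invOf_eq_inv]; ring
  have hfa := hmax a ha
  have hfb := hmax b hb
  obtain ⟨s, hs⟩ := exists_orient_eq_mul_sub hf (show f a = f b by linarith)
  rw [hs, hs, mul_mul_mul_comm, ← sq]
  exact mul_nonneg (sq_nonneg s) (mul_nonneg (by linarith [hmax y hy]) (by linarith [hmax z hz]))

theorem interior_convexHull_nonempty_of_not_collinear {S : Set Pt} {p q r : Pt} (hp : p ∈ S)
    (hq : q ∈ S) (hr : r ∈ S) (h : ¬Collinear ℝ ({p, q, r} : Set Pt)) :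
    (interior (convexHull ℝ S)).Nonempty := by
  rw [(convex_convexHull ℝ S).interior_nonempty_iff_affineSpan_eq_top, affineSpan_convexHull,
    eq_top_iff]
  have hind := affineIndependent_iff_not_collinear_set.2 h
  calc ⊤ = affineSpan ℝ (Set.range ![p, q, r]) :=
        ((hind.affineSpan_eq_top_iff_card_eq_finrank_add_one).2 (by simp)).symm
    _ ≤ affineSpan ℝ S := affineSpan_mono ℝ (by
        rintro _ ⟨i, rfl⟩
        fin_cases i <;> assumption)

theorem pos_of_mul_pos_of_mul_pos {a b c : ℝ} (hab : 0 < a * b) (hbc : 0 < b * c) :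
    0 < a * c :=
  pos_of_mul_pos_left (by linarith [mul_pos hab hbc, show a * b * (b * c) = a * c * b ^ 2 by ring])
    (sq_nonneg b)

structure InConvexOrder (n : ℕ) (v : ℕ → Pt) : Prop where
  injOn : ∀ i < n, ∀ j < n, v i = v j → i = j
  genPos : GenPos ((Finset.range n).image v)
  segment_subset_frontier :
    ∀ i, i + 1 < n → OnHullFrontier ((Finset.range n).image v) (v i) (v (i + 1))

namespace InConvexOrder

variable {n : ℕ} {v : ℕ → Pt}

theorem mem_image {i : ℕ} (hi : i < n) : v i ∈ (Finset.range n).image v :=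
  Finset.mem_image_of_mem v (Finset.mem_range.2 hi)

theorem not_collinear (P : InConvexOrder n v) {i j k : ℕ} (hi : i < n) (hj : j < n)
    (hk : k < n) (hij : i ≠ j) (hik : i ≠ k) (hjk : j ≠ k) :
    ¬Collinear ℝ ({v i, v j, v k} : Set Pt) :=
  P.genPos _ (mem_image hi) _ (mem_image hj) _ (mem_image hk)
    (fun h => hij (P.injOn i hi j hj h)) (fun h => hik (P.injOn i hi k hk h))
    (fun h => hjk (P.injOn j hj k hk h))

theorem orient_ne_zero (P : InConvexOrder n v) {i j k : ℕ} (hi : i < n) (hj : j < n)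
    (hk : k < n) (hij : i ≠ j) (hik : i ≠ k) (hjk : j ≠ k) :
    orient (v i) (v j) (v k) ≠ 0 :=
  fun h => P.not_collinear hi hj hk hij hik hjk (collinear_of_orient_eq_zero h)

theorem orient_mul_orient_pos (P : InConvexOrder n v) {i j k : ℕ} (hi : i + 1 < n)
    (hj : j < n) (hk : k < n) (hji : j ≠ i) (hji' : j ≠ i + 1) (hki : k ≠ i)
    (hki' : k ≠ i + 1) :
    0 < orient (v i) (v (i + 1)) (v j) * orient (v i) (v (i + 1)) (v k) := by
  set K := convexHull ℝ (((Finset.range n).image v : Finset Pt) : Set Pt)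
  have hK : ∀ m < n, v m ∈ K :=
    fun m hm => subset_convexHull ℝ _ (Finset.mem_coe.2 (mem_image hm))
  have hint : (interior K).Nonempty := interior_convexHull_nonempty_of_not_collinear
    (mem_image (n := n) (by omega)) (mem_image hi) (mem_image hj)
    (P.not_collinear (by omega) hi hj (by omega) (Ne.symm hji) (Ne.symm hji'))
  have hmid : midpoint ℝ (v i) (v (i + 1)) ∉ interior K :=
    (P.segment_subset_frontier i hi (midpoint_mem_segment _ _)).2
  refine lt_of_le_of_ne (orient_mul_orient_nonneg_of_midpoint_notMem_interior
    (convex_convexHull ℝ _) hint (hK i (by omega)) (hK (i + 1) hi) hmid (hK j hj) (hK k hk)) ?_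
  exact (mul_ne_zero
    (P.orient_ne_zero (by omega) hi hj (by omega) (Ne.symm hji) (Ne.symm hji'))
    (P.orient_ne_zero (by omega) hi hk (by omega) (Ne.symm hki) (Ne.symm hki'))).symm

theorem edge_orient_pos (P : InConvexOrder n v) {i j : ℕ} (hi : i + 1 < n) (hj : j < n)
    (hji : j ≠ i) (hji' : j ≠ i + 1) :
    0 < orient (v 0) (v 1) (v 2) * orient (v i) (v (i + 1)) (v j) := by
  induction i generalizing j with
  | zero => exact P.orient_mul_orient_pos hi (by omega) hj (by omega) (by omega) hji hji'
  | succ i ih =>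
    have h := ih (by omega) (j := i + 1 + 1) hi (by omega) (by omega)
    rw [orient_rotate (v i)] at h
    exact pos_of_mul_pos_of_mul_pos h
      (P.orient_mul_orient_pos hi (by omega) hj (by omega) (by omega) hji hji')

theorem orient_pos (P : InConvexOrder n v) {a b c : ℕ} (hab : a < b) (hbc : b < c)
    (hc : c < n) : 0 < orient (v 0) (v 1) (v 2) * orient (v a) (v b) (v c) := by
  induction c, hbc using Nat.le_induction with
  | base =>
    rw [orient_rotate (v a)]
    exact P.edge_orient_pos hc (by omega) (by omega) (by omega)
  | succ c hbc ih =>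
    rcases eq_or_ne b (a + 1) with rfl | hb
    · exact P.edge_orient_pos (by omega) hc (by omega) (by omega)
    have hac := P.edge_orient_pos (i := a) (j := c) (by omega) (by omega) (by omega) (by omega)
    have hac' := P.edge_orient_pos (i := a) (j := c + 1) (by omega) hc (by omega) (by omega)
    have hab' := P.edge_orient_pos (i := a) (j := b) (by omega) (by omega) (by omega) hb
    have hcc := P.edge_orient_pos (i := c) (j := a) hc (by omega) (by omega) (by omega)
    rw [← orient_rotate (v a)] at hcc
    set σ := orient (v 0) (v 1) (v 2)
    have key : σ * orient (v a) (v b) (v (c + 1)) * (σ * orient (v a) (v (a + 1)) (v c)) =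
        σ * orient (v a) (v b) (v c) * (σ * orient (v a) (v (a + 1)) (v (c + 1))) +
          σ * orient (v a) (v c) (v (c + 1)) * (σ * orient (v a) (v (a + 1)) (v b)) := by
      linear_combination σ ^ 2 * orient_mul_orient_eq (v a) (v b) (v c) (v (c + 1)) (v (a + 1))
    refine pos_of_mul_pos_left ?_ hac.le
    rw [key]
    exact add_pos (mul_pos (ih (by omega)) hac') (mul_pos hcc hab')

theorem segCross (P : InConvexOrder n v) {a b c d : ℕ} (hac : a < c) (hcb : c < b) (hbd : b < d)
    (hd : d < n) : SegCross (v a) (v b) (v c) (v d) := by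
  have hacb := P.orient_pos hac hcb (by omega)
  have habd := P.orient_pos (hac.trans hcb) hbd hd
  have hacd := P.orient_pos hac (hcb.trans hbd) hd
  have hcbd := P.orient_pos hcb hbd hd
  refine segCross_of_orient_mul_neg ?_ ?_
  · rw [orient_swap (v a) (v b)]
    nlinarith [pos_of_mul_pos_of_mul_pos (by rwa [mul_comm] at hacb) habd]
  · rw [← orient_rotate (v a), orient_swap (v c) (v d) (v b)]
    nlinarith [pos_of_mul_pos_of_mul_pos (by rwa [mul_comm] at hacd) hcbd]

end InConvexOrder

theorem add_one_mod_of_lt {n i : ℕ} (hi : i < n) :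
    (i + 1) % n = if i + 1 = n then 0 else i + 1 := by
  split_ifs with h
  · rw [h, Nat.mod_self]
  · exact Nat.mod_eq_of_lt (by omega)

def NonCrossing (C : Set (Sym2 ℕ)) : Prop :=
  ∀ a c b d, a < c → c < b → b < d → s(a, b) ∈ C → s(c, d) ∉ C

def IntervalClosed (C : Set (Sym2 ℕ)) (a b : ℕ) : Prop :=
  ∀ x y, s(x, y) ∈ C → a < x → x < b → a ≤ y ∧ y ≤ b

namespace IntervalClosed

variable {C : Set (Sym2 ℕ)} {a b : ℕ}

theorem of_mem (hC : NonCrossing C) (h : IntervalClosed C a b) {p q : ℕ} (hpq : s(p, q) ∈ C)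
    (hap : a ≤ p) (hqb : q ≤ b) : IntervalClosed C p q := by
  intro x y hxy hpx hxq
  obtain ⟨hay, hyb⟩ := h x y hxy (by omega) (by omega)
  refine ⟨not_lt.1 fun hyp => ?_, not_lt.1 fun hqy => hC p x q y hpx hxq hqy hpq hxy⟩
  exact hC y p x q hyp hpx hxq (by rwa [Sym2.eq_swap]) hpq

theorem exists_untouched (hC : NonCrossing C)
    (hlong : ∀ p q, s(p, q) ∈ C → p ≤ q → p + 2 ≤ q)
    (h : IntervalClosed C a b) (hab : a + 2 ≤ b) :
    ∃ t, a < t ∧ t < b ∧ ∀ y, s(t, y) ∉ C := by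
  induction hlen : b - a using Nat.strong_induction_on generalizing a b with
  | _ len ih =>
  by_cases hfree : ∀ y, s(a + 1, y) ∉ C
  · exact ⟨a + 1, by omega, by omega, hfree⟩
  obtain ⟨y, hy⟩ := not_forall_not.1 hfree
  obtain ⟨hay, hyb⟩ := h (a + 1) y hy (by omega) (by omega)
  have hlen' : a + 1 + 2 ≤ y := by
    rcases le_or_gt y (a + 1) with hya | hya
    · have := hlong y (a + 1) (by rwa [Sym2.eq_swap]) hya
      omega
    · exact hlong (a + 1) y hy hya.le
  obtain ⟨t, hat, hty, ht⟩ :=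
    ih (y - (a + 1)) (by omega) (h.of_mem hC hy (by omega) hyb) hlen' rfl
  exact ⟨t, by omega, by omega, ht⟩

end IntervalClosed

theorem exists_two_untouched {n : ℕ} (hn : 4 ≤ n) {C : Set (Sym2 ℕ)} (hC : NonCrossing C)
    (hchord : ∀ x y, s(x, y) ∈ C → y < n ∧ x ≠ y ∧ (x + 1) % n ≠ y) :
    ∃ i < n, ∃ j < n, i ≠ j ∧ (i + 1) % n ≠ j ∧ (j + 1) % n ≠ i ∧
      ∀ y, s(i, y) ∉ C ∧ s(j, y) ∉ C := by
  have hlong : ∀ p q, s(p, q) ∈ C → p ≤ q → p + 2 ≤ q := fun p q hpq hle => by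
    obtain ⟨hq, hne, hsucc⟩ := hchord p q hpq
    rw [add_one_mod_of_lt (by omega)] at hsucc
    split_ifs at hsucc <;> omega
  by_cases h0 : ∀ y, s(0, y) ∉ C
  · have hclosed : IntervalClosed C 1 (n - 1) := fun x y hxy _ _ => by
      have := (hchord x y hxy).1
      have : y ≠ 0 := by
        rintro rfl
        exact h0 x (by rwa [Sym2.eq_swap])
      omega
    obtain ⟨t, ht1, htn, ht⟩ := hclosed.exists_untouched hC hlong (by omega)
    refine ⟨0, by omega, t, by omega, by omega, ?_, ?_, fun y => ⟨h0 y, ht y⟩⟩ <;>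
      rw [add_one_mod_of_lt (by omega)] <;> split_ifs <;> omega
  obtain ⟨y₀, hy₀⟩ := not_forall_not.1 h0
  set b := Nat.findGreatest (fun y => s(0, y) ∈ C) n
  have hb : s(0, b) ∈ C :=
    Nat.findGreatest_spec (P := fun y => s(0, y) ∈ C) (hchord 0 y₀ hy₀).1.le hy₀
  have hbmax : ∀ y, s(0, y) ∈ C → y ≤ b :=
    fun y hy => Nat.le_findGreatest (hchord 0 y hy).1.le hy
  have hb2 := hlong 0 b hb (Nat.zero_le b)
  have hbn : b + 2 ≤ n := by
    obtain ⟨-, -, hb0⟩ := hchord b 0 (by rwa [Sym2.eq_swap])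
    have := (hchord 0 b hb).1
    rw [add_one_mod_of_lt this] at hb0
    split_ifs at hb0 <;> omega
  have hleft : IntervalClosed C 0 b := fun x y hxy h0x hxb =>
    ⟨Nat.zero_le y, not_lt.1 fun hby => hC 0 x b y h0x hxb hby hb hxy⟩
  have hright : IntervalClosed C b n := fun x y hxy hbx _ => by
    refine ⟨not_lt.1 fun hyb => ?_, (hchord x y hxy).1.le⟩
    have hyx : s(y, x) ∈ C := by rwa [Sym2.eq_swap]
    rcases Nat.eq_zero_or_pos y with rfl | hy
    · exact absurd (hbmax x hyx) (by omega)
    · exact hC 0 y b x hy hyb hbx hb hyx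
  obtain ⟨t₁, ht₁0, ht₁b, ht₁⟩ := hleft.exists_untouched hC hlong hb2
  obtain ⟨t₂, ht₂b, ht₂n, ht₂⟩ := hright.exists_untouched hC hlong hbn
  refine ⟨t₁, by omega, t₂, ht₂n, by omega, ?_, ?_, fun y => ⟨ht₁ y, ht₂ y⟩⟩ <;>
    rw [add_one_mod_of_lt (by omega)] <;> split_ifs <;> omega

def indexChords (n : ℕ) (v : ℕ → Pt) (H : Finset (Sym2 Pt)) : Set (Sym2 ℕ) :=
  {c | (∀ i ∈ c, i < n) ∧ c.map v ∈ H}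

section indexChords

variable {n : ℕ} {v : ℕ → Pt} {H : Finset (Sym2 Pt)}

theorem mk_mem_indexChords {x y : ℕ} :
    s(x, y) ∈ indexChords n v H ↔ x < n ∧ y < n ∧ s(v x, v y) ∈ H := by
  simp [indexChords, and_assoc]

theorem InConvexOrder.nonCrossing_indexChords (P : InConvexOrder n v)
    (hcross : ∀ e ∈ H, ∀ f ∈ H, e ≠ f → ¬EdgeCross e f) :
    NonCrossing (indexChords n v H) := by
  intro a c b d hac hcb hbd hab hcd
  rw [mk_mem_indexChords] at hab hcd
  refine hcross _ hab.2.2 _ hcd.2.2 (fun h => ?_)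
    ⟨_, _, _, _, rfl, rfl, P.segCross hac hcb hbd hcd.2.1⟩
  have hva : v a ∈ s(v c, v d) := h ▸ Sym2.mem_mk_left _ _
  rcases Sym2.mem_iff.1 hva with hva | hva
  · exact absurd (P.injOn a hab.1 c hcd.1 hva) (by omega)
  · exact absurd (P.injOn a hab.1 d hcd.2.1 hva) (by omega)

theorem chord_of_mk_mem_indexChords (hinj : ∀ i < n, ∀ j < n, v i = v j → i = j)
    (hchord : ∀ e ∈ H, ∃ i < n, ∃ j < n, i ≠ j ∧
      (i + 1) % n ≠ j ∧ (j + 1) % n ≠ i ∧ e = s(v i, v j))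
    (x y : ℕ) (hxy : s(x, y) ∈ indexChords n v H) :
    y < n ∧ x ≠ y ∧ (x + 1) % n ≠ y := by
  obtain ⟨hx, hy, he⟩ := mk_mem_indexChords.1 hxy
  obtain ⟨i, hi, j, hj, hij, hij', hji', heq⟩ := hchord _ he
  rcases Sym2.eq_iff.1 heq with ⟨hxi, hyj⟩ | ⟨hxj, hyi⟩
  · obtain rfl := hinj x hx i hi hxi
    obtain rfl := hinj y hy j hj hyj
    exact ⟨hy, hij, hij'⟩
  · obtain rfl := hinj x hx j hj hxj
    obtain rfl := hinj y hy i hi hyi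
    exact ⟨hy, Ne.symm hij, hji'⟩

theorem notMem_of_forall_notMem_indexChords
    (hH : ∀ e ∈ H, ∃ i < n, ∃ j < n, e = s(v i, v j))
    {t : ℕ} (ht : t < n) (hfree : ∀ y, s(t, y) ∉ indexChords n v H) {e : Sym2 Pt}
    (he : e ∈ H) : v t ∉ e := by
  obtain ⟨i, hi, j, hj, rfl⟩ := hH e he
  intro hvt
  rcases Sym2.mem_iff.1 hvt with hti | htj
  · exact hfree j (mk_mem_indexChords.2 ⟨ht, hj, by rwa [← hti] at he⟩)
  · exact hfree i (mk_mem_indexChords.2 ⟨ht, hi, by rwa [Sym2.eq_swap, ← htj] at he⟩)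

end indexChords

theorem exists_two_nonconsecutive_unused_vertices_general
    (n : ℕ) (hn : 4 ≤ n) (v : ℕ → Pt)
    (hinj : ∀ i < n, ∀ j < n, v i = v j → i = j)
    (hgp : GenPos ((Finset.range n).image v))
    (horder : ∀ i < n,
      OnHullFrontier ((Finset.range n).image v) (v i) (v ((i + 1) % n)))
    (H : Finset (Sym2 Pt))
    (hchord : ∀ e ∈ H, ∃ i < n, ∃ j < n, i ≠ j ∧
      (i + 1) % n ≠ j ∧ (j + 1) % n ≠ i ∧ e = s(v i, v j))
    (hcross : ∀ e ∈ H, ∀ f ∈ H, e ≠ f → ¬ EdgeCross e f) :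
    ∃ i < n, ∃ j < n, i ≠ j ∧ (i + 1) % n ≠ j ∧ (j + 1) % n ≠ i ∧
      ∀ e ∈ H, v i ∉ e ∧ v j ∉ e := by
  have P : InConvexOrder n v :=
    ⟨hinj, hgp, fun i hi => by simpa only [Nat.mod_eq_of_lt hi] using horder i (by omega)⟩
  have hends : ∀ e ∈ H, ∃ i < n, ∃ j < n, e = s(v i, v j) := fun e he => by
    obtain ⟨i, hi, j, hj, -, -, -, rfl⟩ := hchord e he
    exact ⟨i, hi, j, hj, rfl⟩
  obtain ⟨i, hi, j, hj, hij, hij', hji', hfree⟩ := exists_two_untouched hn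
    (P.nonCrossing_indexChords hcross) (chord_of_mk_mem_indexChords hinj hchord)
  exact ⟨i, hi, j, hj, hij, hij', hji', fun e he =>
    ⟨notMem_of_forall_notMem_indexChords hends hi (fun y => (hfree y).1) he,
      notMem_of_forall_notMem_indexChords hends hj (fun y => (hfree y).2) he⟩⟩

/-- Let `v 0, …, v (n-1)` with `n ≥ 4` be points in the plane in convex
position and in general position (no three collinear), listed in convex-position order (each
segment between cyclically consecutive points lies on the boundary of the convex hull), and
let `H` be a set of pairwise non-crossing chords of the convex polygon (segments `v i v j`
between two vertices that are not consecutive in the cyclic order).  Then there exist two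
vertices `v i` and `v j` that are not consecutive in the cyclic order and are incident to no
chord of `H`. -/
theorem exists_two_nonconsecutive_unused_vertices
    (n : ℕ) (hn : 4 ≤ n) (v : ℕ → Pt)
    (hinj : ∀ i < n, ∀ j < n, v i = v j → i = j)
    (hgp : GenPos ((Finset.range n).image v))
    (hconv : ConvexPos ((Finset.range n).image v))
    (horder : ∀ i < n,
      OnHullFrontier ((Finset.range n).image v) (v i) (v ((i + 1) % n)))
    (H : Finset (Sym2 Pt))
    (hchord : ∀ e ∈ H, ∃ i < n, ∃ j < n, i ≠ j ∧
      (i + 1) % n ≠ j ∧ (j + 1) % n ≠ i ∧ e = s(v i, v j))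
    (hcross : ∀ e ∈ H, ∀ f ∈ H, e ≠ f → ¬ EdgeCross e f) :
    ∃ i < n, ∃ j < n, i ≠ j ∧ (i + 1) % n ≠ j ∧ (j + 1) % n ≠ i ∧
      ∀ e ∈ H, v i ∉ e ∧ v j ∉ e :=
  exists_two_nonconsecutive_unused_vertices_general n hn v hinj hgp horder H hchord hcross
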